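/- Let H be a symmetric matrix on E^{(k)} and L a symmetric positive-definite matrix on E^{(k)} satisfying L H L ≤ −L in the Loewner order. Then H is negative definite and 0 < (−H)^{-1} ≤ L. -/

import Mathlib

open Matrix

/-! Conjugating `L H L ≤ -L` by `L⁻¹` gives `L⁻¹ ≤ -H`, so `-H` is positive definite, and
`(-H)⁻¹ ≤ L` because inversion is order-reversing on positive definite matrices. -/

namespace Matrix

variable {n : Type*} [Fintype n] [DecidableEq n]

lemma inv_sub_inv_eq_conj_add_conj {α : Type*} [CommRing α] {A B : Matrix n n α}
    (h : IsUnit A ↔ IsUnit B) :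
    A⁻¹ - B⁻¹ = B⁻¹ * (B - A) * B⁻¹ + B⁻¹ * (B - A) * A⁻¹ * (B - A) * B⁻¹ := by
  calc A⁻¹ - B⁻¹ = B⁻¹ * (B - A) * A⁻¹ := by
        rw [← neg_sub, inv_sub_inv h.symm, ← neg_sub A B, Matrix.mul_neg, Matrix.neg_mul]
    _ = B⁻¹ * (B - A) * B⁻¹ + B⁻¹ * (B - A) * (A⁻¹ - B⁻¹) := by
        rw [Matrix.mul_sub (B⁻¹ * (B - A)), add_sub_cancel]
    _ = _ := by rw [inv_sub_inv h]; simp only [Matrix.mul_assoc]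

variable {K : Type*} [Field K] [PartialOrder K] [StarRing K] [AddLeftMono K]

lemma PosDef.posSemidef_inv_sub_inv {A B : Matrix n n K} (hA : A.PosDef)
    (hAB : (B - A).PosSemidef) : (A⁻¹ - B⁻¹).PosSemidef := by
  have hB : B.PosDef := by simpa using hA.add_posSemidef hAB
  rw [inv_sub_inv_eq_conj_add_conj (iff_of_true hA.isUnit hB.isUnit)]
  have hfirst := hAB.conjTranspose_mul_mul_same B⁻¹
  have hsecond := hA.inv.posSemidef.conjTranspose_mul_mul_same ((B - A) * B⁻¹)
  simp only [conjTranspose_mul, hB.inv.isHermitian.eq, hAB.isHermitian.eq, Matrix.mul_assoc]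
    at hfirst hsecond ⊢
  exact hfirst.add hsecond

end Matrix

theorem loewner_sandwich_general (m : ℕ) (H L : Matrix (Fin m) (Fin m) ℝ)
    (hL : L.PosDef)
    (hLHL : (-L - L * H * L).PosSemidef) :
    (-H).PosDef ∧ ((-H)⁻¹).PosDef ∧ (L - (-H)⁻¹).PosSemidef := by
  have hdet : IsUnit L.det := (isUnit_iff_isUnit_det L).mp hL.isUnit
  have hgap : (-H - L⁻¹).PosSemidef := by
    rw [← hL.isUnit.posSemidef_star_left_conjugate_iff, star_eq_conjTranspose,
      hL.isHermitian.eq]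
    convert hLHL using 1
    simp only [Matrix.mul_sub, Matrix.sub_mul, mul_nonsing_inv L hdet, Matrix.one_mul]
    noncomm_ring
  have hK : (-H).PosDef := by simpa using hL.inv.add_posSemidef hgap
  refine ⟨hK, hK.inv, ?_⟩
  simpa only [nonsing_inv_nonsing_inv L hdet] using hL.inv.posSemidef_inv_sub_inv hgap

/-- If `H` is symmetric, `L` is symmetric positive definite and `L H L ≤ -L` in the
Loewner order, then `H` is negative definite and `0 < (-H)⁻¹ ≤ L`. -/
theorem loewner_sandwich (m : ℕ) (H L : Matrix (Fin m) (Fin m) ℝ)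
    (hH : H.IsSymm) (hL : L.PosDef)
    (hLHL : (-L - L * H * L).PosSemidef) :
    (-H).PosDef ∧ ((-H)⁻¹).PosDef ∧ (L - (-H)⁻¹).PosSemidef :=
  loewner_sandwich_general m H L hL hLHL
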